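/- Let Γ be a basic game that has a convex potential Φ_θ in each state θ, and let I be an information structure. Then for every α > 0, every Bayesian Wardrop α-equilibrium ŷ of (Γ, I) is an α-minimizer of the associated potential Φ_π: Φ_π(ŷ) ≤ min_{ẑ} Φ_π(ẑ) + α, where the minimum is over all interim flow profiles ẑ. -/

import Mathlib

noncomputable section

namespace NonatomicGames

/-- An information structure: finitely many populations with sizes summing to one,
a finite type set per population, and a signal distribution `π θ` for each state. -/
structure InfoStructure (Θ : Type) where
  K : Type
  [instFintypeK : Fintype K]
  [instDecEqK : DecidableEq K]
  T : K → Type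
  [instFintypeT : ∀ k, Fintype (T k)]
  [instDecEqT : ∀ k, DecidableEq (T k)]
  γ : K → ℝ
  γ_pos : ∀ k, 0 < γ k
  γ_sum : ∑ k, γ k = 1
  π : Θ → (∀ k, T k) → ℝ
  π_nonneg : ∀ θ τ, 0 ≤ π θ τ
  π_sum : ∀ θ, ∑ τ, π θ τ = 1

attribute [instance] InfoStructure.instFintypeK InfoStructure.instDecEqK
  InfoStructure.instFintypeT InfoStructure.instDecEqT

/-- A direct information structure: the type set of each population is the action set `A`. -/
structure DirectInfoStructure (A Θ : Type) [Fintype A] [DecidableEq A] where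
  K : Type
  [instFintypeK : Fintype K]
  [instDecEqK : DecidableEq K]
  γ : K → ℝ
  γ_pos : ∀ k, 0 < γ k
  γ_sum : ∑ k, γ k = 1
  π : Θ → (K → A) → ℝ
  π_nonneg : ∀ θ τ, 0 ≤ π θ τ
  π_sum : ∀ θ, ∑ τ, π θ τ = 1

attribute [instance] DirectInfoStructure.instFintypeK DirectInfoStructure.instDecEqK

open MeasureTheory Finset

variable {A Θ : Type} [Fintype A] [DecidableEq A] [Fintype Θ]

/-- The information structure associated with a direct information structure. -/
def DirectInfoStructure.toInfo (I : DirectInfoStructure A Θ) : InfoStructure Θ where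
  K := I.K
  instFintypeK := I.instFintypeK
  instDecEqK := I.instDecEqK
  T := fun _ => A
  instFintypeT := fun _ => inferInstanceAs (Fintype A)
  instDecEqT := fun _ => inferInstanceAs (DecidableEq A)
  γ := I.γ
  γ_pos := I.γ_pos
  γ_sum := I.γ_sum
  π := I.π
  π_nonneg := I.π_nonneg
  π_sum := I.π_sum

/-- The obedient interim flow profile of a direct information structure:
population `k` receiving recommendation `t` puts all its mass `γ k` on action `t`. -/
def DirectInfoStructure.obedient (I : DirectInfoStructure A Θ) :
    ∀ _k : I.K, A → A → ℝ :=
  fun k t a => if t = a then I.γ k else 0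

/-- `yhat` is an interim flow profile: nonnegative flows summing to the population sizes. -/
def IsInterim (I : InfoStructure Θ) (yhat : ∀ k, I.T k → A → ℝ) : Prop :=
  (∀ k t a, 0 ≤ yhat k t a) ∧ ∀ k t, ∑ a, yhat k t a = I.γ k

/-- The interim total flow profile given the type profile `τ`. -/
def totalFlow (I : InfoStructure Θ) (yhat : ∀ k, I.T k → A → ℝ) (τ : ∀ k, I.T k) :
    A → ℝ :=
  fun a => ∑ k, yhat k (τ k) a

/-- The total probability `P(τᵏ)` of type `tk` for population `k`. -/
def typeProb (I : InfoStructure Θ) (p : Θ → ℝ) (k : I.K) (tk : I.T k) : ℝ :=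
  ∑ θ, ∑ τ : ∀ j, I.T j, if τ k = tk then p θ * I.π θ τ else 0

/-- Bayesian Wardrop ε-equilibrium of the basic game `(p, c)` extended with `I`. -/
def IsBWEps (I : InfoStructure Θ) (p : Θ → ℝ) (c : A → (A → ℝ) → Θ → ℝ) (ε : ℝ)
    (yhat : ∀ k, I.T k → A → ℝ) : Prop :=
  IsInterim I yhat ∧
  ∀ (k : I.K) (tk : I.T k), 0 < typeProb I p k tk →
    ∀ a b : A, 0 < yhat k tk a →
      (∑ θ, ∑ τ : ∀ j, I.T j,
        if τ k = tk then
          p θ * I.π θ τ * (c a (totalFlow I yhat τ) θ - c b (totalFlow I yhat τ) θ)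
        else 0)
      ≤ ε * typeProb I p k tk

/-- The outcome (state-dependent distribution over flow profiles) induced by `yhat`. -/
def outcomeMeasure (I : InfoStructure Θ) (yhat : ∀ k, I.T k → A → ℝ) (θ : Θ) :
    Measure (A → ℝ) :=
  ∑ τ : ∀ k, I.T k, ENNReal.ofReal (I.π θ τ) • Measure.dirac (totalFlow I yhat τ)

/-- The probability that the induced outcome puts on the flow profile `z` in state `θ`. -/
def outcomeWeight (I : InfoStructure Θ) (yhat : ∀ k, I.T k → A → ℝ) (θ : Θ)
    (z : A → ℝ) : ℝ :=
  ∑ τ : ∀ k, I.T k, if totalFlow I yhat τ = z then I.π θ τ else 0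

/-- The auxiliary (non-normalized interim) cost `C_a^{k,τᵏ}(yhat)`. -/
def auxCost (I : InfoStructure Θ) (p : Θ → ℝ) (c : A → (A → ℝ) → Θ → ℝ)
    (yhat : ∀ k, I.T k → A → ℝ) (k : I.K) (tk : I.T k) (a : A) : ℝ :=
  ∑ θ, ∑ τ : ∀ j, I.T j,
    if τ k = tk then p θ * I.π θ τ * c a (totalFlow I yhat τ) θ else 0

/-- The potential `Φ_π` of the auxiliary multi-population game. -/
def potPi (I : InfoStructure Θ) (p : Θ → ℝ) (Φ : Θ → (A → ℝ) → ℝ)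
    (yhat : ∀ k, I.T k → A → ℝ) : ℝ :=
  ∑ θ, ∑ τ : ∀ k, I.T k, p θ * I.π θ τ * Φ θ (totalFlow I yhat τ)

/-- The social cost `SC(y, θ) = Σ_a y_a c_a(y, θ)`. -/
def socialCost (c : A → (A → ℝ) → Θ → ℝ) (y : A → ℝ) (θ : Θ) : ℝ :=
  ∑ a, y a * c a y θ

/-- The total cost `TC(yhat)`. -/
def totalCost (I : InfoStructure Θ) (p : Θ → ℝ) (c : A → (A → ℝ) → Θ → ℝ)
    (yhat : ∀ k, I.T k → A → ℝ) : ℝ :=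
  ∑ k, ∑ tk : I.T k, ∑ a, yhat k tk a * auxCost I p c yhat k tk a

/-- An outcome: a state-dependent Borel probability measure supported on the simplex `Y`. -/
def IsOutcome (μ : Θ → Measure (A → ℝ)) : Prop :=
  (∀ θ, IsProbabilityMeasure (μ θ)) ∧ ∀ θ, μ θ (stdSimplex ℝ A)ᶜ = 0

/-- Bayes correlated Wardrop equilibrium of the basic game `(p, c)`. -/
def IsBCWE (p : Θ → ℝ) (c : A → (A → ℝ) → Θ → ℝ) (μ : Θ → Measure (A → ℝ)) : Prop :=
  IsOutcome μ ∧
  ∀ a b : A,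
    ∑ θ, p θ * ∫ y, y a * c a y θ ∂(μ θ) ≤ ∑ θ, p θ * ∫ y, y a * c b y θ ∂(μ θ)

/-- `Φ` is a (state-by-state) potential for the cost profile `c`: for each state it is
continuously differentiable on an open neighborhood of the simplex and its partial
derivative in the direction of each action `a` is the cost of `a`. -/
def IsPotential (c : A → (A → ℝ) → Θ → ℝ) (Φ : Θ → (A → ℝ) → ℝ) : Prop :=
  ∀ θ, ∃ U : Set (A → ℝ), IsOpen U ∧ stdSimplex ℝ A ⊆ U ∧
    ContDiffOn ℝ 1 (Φ θ) U ∧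
    ∀ y ∈ stdSimplex ℝ A, ∀ a, fderiv ℝ (Φ θ) y (Pi.single a 1) = c a y θ

end NonatomicGames

/-!
Convexity of `Φ_θ` gives the gradient inequality `Φ_θ(y) + ∇Φ_θ(y) · (z - y) ≤ Φ_θ(z)`, and
`∇Φ_θ = c(·, θ)`. Averaging over states and type profiles, the linear term becomes
`Σ_k Σ_{τᵏ} Σ_a (zᵏ_a(τᵏ) - yᵏ_a(τᵏ)) C_a^{k,τᵏ}(ŷ)` with the interim costs `C^{k,τᵏ}`. In the
α-equilibrium `ŷ` every type only uses actions within `α P(τᵏ)` of its cheapest one, so the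
`(k, τᵏ)` term is at least `-α γᵏ P(τᵏ)`; these bounds add up to `-α`.
-/

open Finset

theorem ConvexOn.add_fderiv_sub_le {E : Type*} [NormedAddCommGroup E] [NormedSpace ℝ E]
    {s : Set E} {f : E → ℝ} (hf : ConvexOn ℝ s f) {x y : E} (hx : x ∈ s) (hy : y ∈ s)
    (hd : DifferentiableAt ℝ f x) : f x + fderiv ℝ f x (y - x) ≤ f y := by
  let g : ℝ → ℝ := f ∘ AffineMap.lineMap x y
  have hconv : ConvexOn ℝ (Set.Icc 0 1) g :=
    (hf.comp_affineMap _).subset (hf.1.mapsTo_lineMap hx hy) (convex_Icc 0 1)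
  have hderiv : HasDerivAt g (fderiv ℝ f x (y - x)) 0 := by
    have hd' : HasFDerivAt f (fderiv ℝ f x) (AffineMap.lineMap x y (0 : ℝ)) := by
      simpa using hd.hasFDerivAt
    exact hd'.comp_hasDerivAt 0 AffineMap.hasDerivAt_lineMap
  have hslope := hconv.le_slope_of_hasDerivAt (Set.left_mem_Icc.2 zero_le_one)
    (Set.right_mem_Icc.2 zero_le_one) zero_lt_one hderiv
  simp only [slope, g, Function.comp_apply, AffineMap.lineMap_apply_zero,
    AffineMap.lineMap_apply_one, sub_zero, inv_one, vsub_eq_sub, smul_eq_mul, one_mul] at hslope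
  linarith

theorem ContinuousLinearMap.apply_eq_sum_mul_single {ι : Type*} [Fintype ι] [DecidableEq ι]
    (L : (ι → ℝ) →L[ℝ] ℝ) (v : ι → ℝ) : L v = ∑ i, v i * L (Pi.single i 1) := by
  conv_lhs => rw [← univ_sum_single v, map_sum]
  refine sum_congr rfl fun i _ => ?_
  rw [← smul_eq_mul, ← map_smul, ← Pi.single_smul', smul_eq_mul, mul_one]

theorem sum_sum_ite_apply_eq {ι : Type*} {T : ι → Type*} [∀ i, Fintype (T i)]
    [∀ i, DecidableEq (T i)] [Fintype (∀ i, T i)] (i : ι) (F : T i → (∀ j, T j) → ℝ) :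
    ∑ t, ∑ τ : ∀ j, T j, (if τ i = t then F t τ else 0) = ∑ τ : ∀ j, T j, F (τ i) τ := by
  rw [sum_comm]
  simp

theorem neg_mul_le_sum_sub_mul {ι : Type*} [Fintype ι] {y z C : ι → ℝ} {m ε : ℝ}
    (hy : ∀ i, 0 ≤ y i) (hz : ∀ i, 0 ≤ z i) (hy_sum : ∑ i, y i = m) (hz_sum : ∑ i, z i = m)
    (hC : ∀ i j, 0 < y i → C i - C j ≤ ε) : -(m * ε) ≤ ∑ i, (z i - y i) * C i := by
  rcases isEmpty_or_nonempty ι with hι | hι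
  · simp [← hy_sum]
  obtain ⟨j, -, hj⟩ := exists_min_image univ C univ_nonempty
  have hy_le : ∑ i, y i * (C i - C j) ≤ m * ε := by
    rw [← hy_sum, sum_mul]
    refine sum_le_sum fun i _ => ?_
    rcases (hy i).eq_or_lt with h0 | hpos
    · simp [← h0]
    · exact mul_le_mul_of_nonneg_left (hC i j hpos) hpos.le
  have hz_ge : 0 ≤ ∑ i, z i * (C i - C j) :=
    sum_nonneg fun i _ => mul_nonneg (hz i) (sub_nonneg.2 (hj i (mem_univ i)))
  have hsplit : ∑ i, (z i - y i) * C i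
      = ∑ i, z i * (C i - C j) - ∑ i, y i * (C i - C j) := by
    simp only [mul_sub, sub_mul, sum_sub_distrib, ← sum_mul, hy_sum, hz_sum]
    ring
  linarith

namespace NonatomicGames

variable {A Θ : Type}

theorem IsPotential.add_sum_sub_mul_le [Fintype A] [DecidableEq A]
    {c : A → (A → ℝ) → Θ → ℝ} {Φ : Θ → (A → ℝ) → ℝ} (hΦ : IsPotential c Φ) {θ : Θ}
    (hconv : ConvexOn ℝ (stdSimplex ℝ A) (Φ θ)) {y z : A → ℝ} (hy : y ∈ stdSimplex ℝ A)
    (hz : z ∈ stdSimplex ℝ A) : Φ θ y + ∑ a, (z a - y a) * c a y θ ≤ Φ θ z := by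
  obtain ⟨U, hU, hsub, hdiff, hderiv⟩ := hΦ θ
  have hd : DifferentiableAt ℝ (Φ θ) y :=
    (hdiff.differentiableOn one_ne_zero).differentiableAt (hU.mem_nhds (hsub hy))
  have hlin : fderiv ℝ (Φ θ) y (z - y) = ∑ a, (z a - y a) * c a y θ := by
    simp only [ContinuousLinearMap.apply_eq_sum_mul_single, hderiv y hy, Pi.sub_apply]
  simpa only [hlin] using hconv.add_fderiv_sub_le hy hz hd

theorem totalFlow_mem_stdSimplex [Fintype A] {I : InfoStructure Θ}
    {yhat : ∀ k, I.T k → A → ℝ} (hy : IsInterim I yhat) (τ : ∀ k, I.T k) :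
    totalFlow I yhat τ ∈ stdSimplex ℝ A := by
  refine ⟨fun a => sum_nonneg fun k _ => hy.1 k (τ k) a, ?_⟩
  simp only [totalFlow]
  rw [sum_comm]
  simp only [hy.2, I.γ_sum]

theorem totalFlow_sub (I : InfoStructure Θ) (zhat yhat : ∀ k, I.T k → A → ℝ)
    (τ : ∀ k, I.T k) :
    totalFlow I (zhat - yhat) τ = totalFlow I zhat τ - totalFlow I yhat τ := by
  ext a
  simp [totalFlow, sum_sub_distrib]

theorem potPi_add_le [Fintype A] [DecidableEq A] [Fintype Θ] {p : Θ → ℝ}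
    (hp : ∀ θ, 0 ≤ p θ) {c : A → (A → ℝ) → Θ → ℝ} {Φ : Θ → (A → ℝ) → ℝ}
    (hΦ : IsPotential c Φ) (hconv : ∀ θ, ConvexOn ℝ (stdSimplex ℝ A) (Φ θ))
    {I : InfoStructure Θ} {yhat zhat : ∀ k, I.T k → A → ℝ} (hy : IsInterim I yhat)
    (hz : IsInterim I zhat) :
    potPi I p Φ yhat + ∑ θ, ∑ τ, p θ * I.π θ τ *
        ∑ a, totalFlow I (zhat - yhat) τ a * c a (totalFlow I yhat τ) θ
      ≤ potPi I p Φ zhat := by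
  simp only [potPi, ← sum_add_distrib, ← mul_add, totalFlow_sub, Pi.sub_apply]
  gcongr with θ _ τ _
  · exact mul_nonneg (hp θ) (I.π_nonneg θ τ)
  · exact hΦ.add_sum_sub_mul_le (hconv θ) (totalFlow_mem_stdSimplex hy τ)
      (totalFlow_mem_stdSimplex hz τ)

theorem sum_mul_auxCost [Fintype A] [Fintype Θ] (I : InfoStructure Θ) (p : Θ → ℝ)
    (c : A → (A → ℝ) → Θ → ℝ) (yhat d : ∀ k, I.T k → A → ℝ) :
    ∑ k, ∑ tk, ∑ a, d k tk a * auxCost I p c yhat k tk a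
      = ∑ θ, ∑ τ, p θ * I.π θ τ * ∑ a, totalFlow I d τ a * c a (totalFlow I yhat τ) θ := by
  set w := fun θ τ a => p θ * I.π θ τ * c a (totalFlow I yhat τ) θ
  have hfiber : ∀ k, ∑ tk, ∑ a, d k tk a * auxCost I p c yhat k tk a
      = ∑ θ, ∑ τ : ∀ j, I.T j, ∑ a, d k (τ k) a * w θ τ a := by
    intro k
    have hpull : ∀ tk, ∑ a, d k tk a * auxCost I p c yhat k tk a
        = ∑ θ, ∑ τ : ∀ j, I.T j, if τ k = tk then ∑ a, d k tk a * w θ τ a else 0 := by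
      intro tk
      simp only [auxCost, mul_sum, mul_ite, mul_zero]
      rw [sum_comm]
      refine sum_congr rfl fun θ _ => ?_
      rw [sum_comm]
      exact sum_congr rfl fun τ _ => by split_ifs <;> simp [w]
    simp only [hpull]
    rw [sum_comm]
    exact sum_congr rfl fun θ _ => sum_sum_ite_apply_eq k _
  simp only [hfiber, totalFlow, mul_sum, sum_mul]
  rw [sum_comm]
  refine sum_congr rfl fun θ _ => ?_
  rw [sum_comm]
  refine sum_congr rfl fun τ _ => ?_
  rw [sum_comm]
  exact sum_congr rfl fun a _ => sum_congr rfl fun k _ => by ring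

section

variable [Fintype Θ] {I : InfoStructure Θ} {p : Θ → ℝ}

theorem typeProb_nonneg (hp : ∀ θ, 0 ≤ p θ) (k : I.K) (tk : I.T k) :
    0 ≤ typeProb I p k tk :=
  sum_nonneg fun θ _ => sum_nonneg fun τ _ => by
    split_ifs
    exacts [mul_nonneg (hp θ) (I.π_nonneg θ τ), le_rfl]

theorem sum_typeProb (hp_sum : ∑ θ, p θ = 1) (k : I.K) : ∑ tk, typeProb I p k tk = 1 := by
  calc ∑ tk, typeProb I p k tk = ∑ θ, ∑ τ : ∀ j, I.T j, p θ * I.π θ τ := by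
        simp only [typeProb]
        rw [sum_comm]
        exact sum_congr rfl fun θ _ => sum_sum_ite_apply_eq k _
    _ = 1 := by simp only [← mul_sum, I.π_sum, mul_one, hp_sum]

theorem auxCost_eq_zero_of_typeProb_eq_zero (hp : ∀ θ, 0 ≤ p θ) {k : I.K} {tk : I.T k}
    (h : typeProb I p k tk = 0) (c : A → (A → ℝ) → Θ → ℝ) (yhat : ∀ k, I.T k → A → ℝ)
    (a : A) : auxCost I p c yhat k tk a = 0 := by
  have hw : ∀ θ τ, 0 ≤ if τ k = tk then p θ * I.π θ τ else 0 := fun θ τ => by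
    split_ifs
    exacts [mul_nonneg (hp θ) (I.π_nonneg θ τ), le_rfl]
  have hzero : ∀ θ (τ : ∀ j, I.T j), τ k = tk → p θ * I.π θ τ = 0 := fun θ τ hτ => by
    have hθ := (sum_eq_zero_iff_of_nonneg fun θ _ => sum_nonneg fun τ _ => hw θ τ).1 h θ
      (mem_univ θ)
    simpa [hτ] using (sum_eq_zero_iff_of_nonneg fun τ _ => hw θ τ).1 hθ τ (mem_univ τ)
  refine sum_eq_zero fun θ _ => sum_eq_zero fun τ _ => ?_
  split_ifs with hτ
  · rw [hzero θ τ hτ, zero_mul]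
  · rfl

theorem IsBWEps.auxCost_sub_le [Fintype A] {c : A → (A → ℝ) → Θ → ℝ} {ε : ℝ}
    {yhat : ∀ k, I.T k → A → ℝ} (hp : ∀ θ, 0 ≤ p θ) (h : IsBWEps I p c ε yhat) {k : I.K}
    {tk : I.T k} {a : A} (ha : 0 < yhat k tk a) (b : A) :
    auxCost I p c yhat k tk a - auxCost I p c yhat k tk b ≤ ε * typeProb I p k tk := by
  rcases (typeProb_nonneg hp k tk).eq_or_lt with h0 | hpos
  · simp [auxCost_eq_zero_of_typeProb_eq_zero hp h0.symm, ← h0]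
  · convert h.2 k tk hpos a b ha using 1
    simp only [auxCost, ← sum_sub_distrib]
    refine sum_congr rfl fun θ _ => sum_congr rfl fun τ _ => ?_
    split_ifs
    exacts [(mul_sub _ _ _).symm, sub_zero 0]

theorem IsBWEps.neg_le_sum_sub_mul_auxCost [Fintype A] {c : A → (A → ℝ) → Θ → ℝ} {ε : ℝ}
    {yhat zhat : ∀ k, I.T k → A → ℝ} (hp : ∀ θ, 0 ≤ p θ) (hp_sum : ∑ θ, p θ = 1)
    (h : IsBWEps I p c ε yhat) (hz : IsInterim I zhat) :
    -ε ≤ ∑ k, ∑ tk, ∑ a, (zhat k tk a - yhat k tk a) * auxCost I p c yhat k tk a := by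
  calc -ε = ∑ k, ∑ tk, -(I.γ k * (ε * typeProb I p k tk)) := by
        simp only [sum_neg_distrib, ← mul_sum, sum_typeProb hp_sum, mul_one, ← sum_mul,
          I.γ_sum, one_mul]
    _ ≤ _ := sum_le_sum fun k _ => sum_le_sum fun tk _ =>
        neg_mul_le_sum_sub_mul (h.1.1 k tk) (hz.1 k tk) (h.1.2 k tk) (hz.2 k tk)
          fun _ b ha => h.auxCost_sub_le hp ha b

end

variable [Fintype A] [DecidableEq A] [Fintype Θ]

theorem alpha_equilibrium_alpha_minimizer_general
    (p : Θ → ℝ) (hp_pos : ∀ θ, 0 < p θ) (hp_sum : ∑ θ, p θ = 1)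
    (c : A → (A → ℝ) → Θ → ℝ)
    (Φ : Θ → (A → ℝ) → ℝ) (hΦ : IsPotential c Φ)
    (hconv : ∀ θ, ConvexOn ℝ (stdSimplex ℝ A) (Φ θ))
    (I : InfoStructure Θ) (α : ℝ)
    (yhat : ∀ k, I.T k → A → ℝ) (h : IsBWEps I p c α yhat) :
    ∀ zhat : ∀ k, I.T k → A → ℝ, IsInterim I zhat →
      potPi I p Φ yhat ≤ potPi I p Φ zhat + α := by
  intro zhat hz
  have hp : ∀ θ, 0 ≤ p θ := fun θ => (hp_pos θ).le
  have hgrad := potPi_add_le hp hΦ hconv h.1 hz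
  rw [← sum_mul_auxCost] at hgrad
  simp only [Pi.sub_apply] at hgrad
  linarith [h.neg_le_sum_sub_mul_auxCost hp hp_sum hz]

/-- with a convex potential in each state, every Bayesian Wardrop
α-equilibrium is an α-minimizer of the associated potential `Φ_π`. -/
theorem alpha_equilibrium_alpha_minimizer
    (p : Θ → ℝ) (hp_pos : ∀ θ, 0 < p θ) (hp_sum : ∑ θ, p θ = 1)
    (c : A → (A → ℝ) → Θ → ℝ)
    (hc : ∀ a θ, ContinuousOn (fun y => c a y θ) (stdSimplex ℝ A))
    (Φ : Θ → (A → ℝ) → ℝ) (hΦ : IsPotential c Φ)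
    (hconv : ∀ θ, ConvexOn ℝ (stdSimplex ℝ A) (Φ θ))
    (I : InfoStructure Θ) (α : ℝ) (hα : 0 < α)
    (yhat : ∀ k, I.T k → A → ℝ) (h : IsBWEps I p c α yhat) :
    ∀ zhat : ∀ k, I.T k → A → ℝ, IsInterim I zhat →
      potPi I p Φ yhat ≤ potPi I p Φ zhat + α :=
  alpha_equilibrium_alpha_minimizer_general p hp_pos hp_sum c Φ hΦ hconv I α yhat h

end NonatomicGames
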